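/- arXiv:1608.08460 — 6 statements merged into one kernel-verified Lean document; each statement's English description precedes it below -/
import Mathlib

section
/- For any two nonzero vectors |α⟩ and |β⟩ in a d-dimensional Hilbert space, there exists a maximally coherent pure state |ψ⟩ = (1/√d) ∑_{j=0}^{d−1} e^{iθ_j}|j⟩ such that ⟨α|ψ⟩ ≠ 0 and ⟨β|ψ⟩ ≠ 0. -/
/-!
Take the phases in arithmetic progression, `θ_j = j t`. Then `⟨γ|ψ⟩` is `1/√d` times the value
at `e^{it}` of the polynomial `∑_j conj(γ_j) X^j`, which is nonzero for `γ ≠ 0`. The product of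
the polynomials attached to `α` and `β` is nonzero, hence has finitely many roots, and so misses
some point of the (infinite) unit circle.
-/

open Polynomial Complex Finset

namespace Polynomial

theorem ofFn_ne_zero {R : Type*} [Semiring R] [DecidableEq R] {n : ℕ} {v : Fin n → R}
    (hv : v ≠ 0) : ofFn n v ≠ 0 :=
  (map_ne_zero_iff _ (injective_ofFn n)).2 hv

theorem eval_ofFn {R : Type*} [CommSemiring R] [DecidableEq R] {n : ℕ} (v : Fin n → R) (x : R) :
    (ofFn n v).eval x = ∑ i, v i * x ^ (i : ℕ) := by
  simp only [ofFn_eq_sum_monomial, eval_finsetSum, eval_monomial]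

theorem exists_eval_exp_mul_I_ne_zero {p : ℂ[X]} (hp : p ≠ 0) :
    ∃ t : ℝ, p.eval (exp (t * I)) ≠ 0 := by
  have : Infinite Circle :=
    Circle.argEquiv.infinite_iff.2 (Set.Ioc_infinite (neg_lt_self Real.pi_pos)).to_subtype
  have hroots : {z : Circle | p.IsRoot z}.Finite :=
    (finite_setOfPred_isRoot hp).preimage Subtype.val_injective.injOn
  obtain ⟨z, hz⟩ := hroots.infinite_compl.nonempty
  obtain ⟨t, rfl⟩ := Circle.exp_surjective z
  exact ⟨t, by simpa [Circle.coe_exp] using hz⟩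

end Polynomial

theorem sum_conj_mul_exp_eq_eval_ofFn {n : ℕ} (v : Fin n → ℂ) (c t : ℝ) :
    ∑ j, (starRingEnd ℂ) (v j) * ((c : ℂ) * exp (I * ((t * j : ℝ) : ℂ))) =
      c * (ofFn n (star v)).eval (exp (t * I)) := by
  rw [eval_ofFn, mul_sum]
  refine sum_congr rfl fun j _ => ?_
  rw [← exp_nat_mul, Pi.star_apply, ← starRingEnd_apply]
  push_cast
  ring_nf

/-- For any two nonzero vectors `α, β` in `ℂ^d` there exists a maximally
coherent state `|ψ⟩ = (1/√d) ∑_j e^{iθ_j}|j⟩` with `⟨α|ψ⟩ ≠ 0` and `⟨β|ψ⟩ ≠ 0`. -/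
theorem exists_maximally_coherent_nonorthogonal (d : ℕ) (hd : 0 < d)
    (α β : Fin d → ℂ) (hα : α ≠ 0) (hβ : β ≠ 0) :
    ∃ θ : Fin d → ℝ,
      (∑ j, (starRingEnd ℂ) (α j) *
        ((1 / Real.sqrt d : ℝ) * Complex.exp (Complex.I * (θ j : ℝ))) ≠ 0) ∧
      (∑ j, (starRingEnd ℂ) (β j) *
        ((1 / Real.sqrt d : ℝ) * Complex.exp (Complex.I * (θ j : ℝ))) ≠ 0) := by
  obtain ⟨t, ht⟩ := exists_eval_exp_mul_I_ne_zero
    (mul_ne_zero (ofFn_ne_zero (star_ne_zero.2 hα)) (ofFn_ne_zero (star_ne_zero.2 hβ)))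
  rw [eval_mul] at ht
  have hc : ((1 / Real.sqrt d : ℝ) : ℂ) ≠ 0 := by
    rw [ofReal_ne_zero]
    positivity
  refine ⟨fun j => t * j, ?_, ?_⟩ <;> rw [sum_conj_mul_exp_eq_eval_ofFn]
  · exact mul_ne_zero hc (left_ne_zero_of_mul ht)
  · exact mul_ne_zero hc (right_ne_zero_of_mul ht)
end

section
/- Let Φ be an incoherent channel on ℂ^d such that Φ(|ψ⟩⟨ψ|) is diagonal for every maximally coherent state |ψ⟩. Then Φ(|i⟩⟨j|) is diagonal for all reference basis indices i, j. -/
/-!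
The diagonal matrix units are handled by incoherence. For `i ≠ j`, let `u(z, w)` be the all-ones
vector with `z` at `i` and `w` at `j`. By orthogonality of characters, averaging
`z̄ w · u(z, w) u(z, w)*` over `z ∈ {±1, ±i}` and `w ∈ {±1}` gives `|i⟩⟨j|` (up to the factor 8),
so `|i⟩⟨j|` lies in the span of projectors onto maximally coherent states, and every off-diagonal
entry of `Φ` vanishes on that span.
-/

open Matrix Complex

theorem Complex.exp_I_mul_arg {z : ℂ} (hz : ‖z‖ = 1) : exp (I * arg z) = z := by
  simpa [hz, mul_comm I] using norm_mul_exp_arg_mul_I z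

namespace Matrix

variable {n : Type*}

theorem vecMulVec_mul_exp_I_mul_arg {u : n → ℂ} (hu : ∀ k, ‖u k‖ = 1) (c : ℂ) :
    vecMulVec (fun k => c * exp (I * (arg (u k) : ℝ)))
        (fun k => star (c * exp (I * (arg (u k) : ℝ)))) =
      (c * star c) • vecMulVec u (star u) := by
  ext k l
  simp [vecMulVec_apply, Complex.exp_I_mul_arg (hu _)]
  ring

variable [DecidableEq n]

def phaseVec (i j : n) (z w : ℂ) : n → ℂ :=
  Function.update (Function.update (fun _ => 1) i z) j w

theorem norm_phaseVec (i j : n) {z w : ℂ} (hz : ‖z‖ = 1) (hw : ‖w‖ = 1) (k : n) :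
    ‖phaseVec i j z w k‖ = 1 := by
  unfold phaseVec
  rcases eq_or_ne k j with rfl | hkj
  · simpa
  rcases eq_or_ne k i with rfl | hki
  · simpa [hkj]
  · simp [hkj, hki]

theorem sum_smul_vecMulVec_phaseVec {i j : n} (hij : i ≠ j) :
    ∑ a : Fin 4, ∑ b : Fin 2, (star (I ^ (a : ℕ)) * (-1) ^ (b : ℕ)) •
      vecMulVec (phaseVec i j (I ^ (a : ℕ)) ((-1) ^ (b : ℕ)))
        (star (phaseVec i j (I ^ (a : ℕ)) ((-1) ^ (b : ℕ)))) = (8 : ℂ) • single i j 1 := by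
  ext k l
  simp only [Fin.sum_univ_four, Fin.sum_univ_two, add_apply, smul_apply, vecMulVec_apply,
    phaseVec, Function.update_apply, Pi.star_apply, single_apply, smul_eq_mul,
    @eq_comm _ i k, @eq_comm _ j l]
  by_cases hki : k = i <;> by_cases hkj : k = j <;> by_cases hli : l = i <;>
    by_cases hlj : l = j <;> simp_all [Complex.ext_iff, pow_succ] <;> norm_num

theorem single_mem_span_vecMulVec_unimodular [Fintype n] {i j : n} (hij : i ≠ j) :
    single i j (1 : ℂ) ∈
      Submodule.span ℂ {M | ∃ u : n → ℂ, (∀ k, ‖u k‖ = 1) ∧ vecMulVec u (star u) = M} := by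
  have h8 : (8 : ℂ) ≠ 0 := by norm_num
  rw [← inv_smul_smul₀ h8 (single i j 1), ← sum_smul_vecMulVec_phaseVec hij]
  refine Submodule.smul_mem _ _ (Submodule.sum_mem _ fun a _ => Submodule.sum_mem _ fun b _ =>
    Submodule.smul_mem _ _ (Submodule.subset_span ⟨_, norm_phaseVec i j ?_ ?_, rfl⟩)) <;> simp

end Matrix

/-- Let `Φ` be an incoherent (diagonal-preserving) linear channel on `ℂ^d` such
that `Φ(|ψ⟩⟨ψ|)` is diagonal for every maximally coherent state
`|ψ⟩ = (1/√d) ∑_j e^{iθ_j}|j⟩`. Then `Φ(|i⟩⟨j|)` is diagonal for all reference indices `i, j`. -/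
theorem diagonal_on_all_matrix_units (d : ℕ)
    (Φ : Matrix (Fin d) (Fin d) ℂ →ₗ[ℂ] Matrix (Fin d) (Fin d) ℂ)
    (hinc : ∀ A : Matrix (Fin d) (Fin d) ℂ, A.IsDiag → (Φ A).IsDiag)
    (hmcs : ∀ θ : Fin d → ℝ,
      (Φ (Matrix.vecMulVec
        (fun j => ((1 / Real.sqrt d : ℝ) : ℂ) * Complex.exp (Complex.I * (θ j : ℝ)))
        (fun j => star (((1 / Real.sqrt d : ℝ) : ℂ) * Complex.exp (Complex.I * (θ j : ℝ)))))).IsDiag) :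
    ∀ i j : Fin d, (Φ (Matrix.single i j (1 : ℂ))).IsDiag := by
  intro i j
  rcases eq_or_ne i j with rfl | hij
  · exact hinc _ (diagonal_single i (1 : ℂ) ▸ isDiag_diagonal _)
  intro p q hpq
  have hc : ((1 / Real.sqrt d : ℝ) : ℂ) ≠ 0 := by
    have : (d : ℝ) ≠ 0 := by exact_mod_cast (Fin.pos i).ne'
    simpa
  refine Submodule.span_le (p := LinearMap.ker (entryLinearMap ℂ ℂ p q ∘ₗ Φ)).2 ?_
    (single_mem_span_vecMulVec_unimodular hij)
  rintro _ ⟨u, hu, rfl⟩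
  have hentry := hmcs (fun k => arg (u k)) hpq
  rw [vecMulVec_mul_exp_I_mul_arg hu, map_smul, Matrix.smul_apply, smul_eq_mul] at hentry
  exact (mul_eq_zero.1 hentry).resolve_left (mul_ne_zero hc (star_ne_zero.2 hc))
end

section
/- Let Φ be a quantum channel on ℂ^d such that Φ(|i⟩⟨j|) is diagonal in the reference basis for all i, j. Then the Choi state (I ⊗ Φ)(|β⟩⟨β|), where |β⟩ = (1/√d) ∑_i |ii⟩, is separable; hence Φ is an entanglement breaking channel. -/
open Matrix ComplexOrder Kronecker

/-!
The `((a, m), (b, l))` entry of the Choi matrix is `Φ(|a⟩⟨b|) m l`, so diagonal outputs make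
the Choi matrix block diagonal in the output factor, i.e. equal to `∑ₖ ρₖ ⊗ |k⟩⟨k|` with
`ρₖ = (Φ(|a⟩⟨b|) k k)_{a,b}`. Each `ρₖ` is a principal submatrix of the positive
semidefinite Choi matrix, hence positive semidefinite.
-/

namespace Matrix

variable {ι κ R : Type*}

theorem sum_sum_single_kronecker_apply [Fintype ι] [DecidableEq ι] [NonAssocSemiring R]
    (f : ι → ι → Matrix κ κ R) (a b : ι) (m l : κ) :
    (∑ i, ∑ j, single i j (1 : R) ⊗ₖ f i j) (a, m) (b, l) = f a b m l := by
  simp only [sum_apply, kroneckerMap_apply, single_apply, ite_mul, one_mul, zero_mul]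
  simp [Finset.sum_ite_eq', ite_and]

theorem eq_sum_submatrix_kronecker_single_of_blockDiagonal [Fintype κ] [DecidableEq κ]
    [Semiring R] {M : Matrix (ι × κ) (ι × κ) R} (hM : ∀ a b m l, m ≠ l → M (a, m) (b, l) = 0) :
    M = ∑ k, M.submatrix (·, k) (·, k) ⊗ₖ single k k (1 : R) := by
  ext ⟨a, m⟩ ⟨b, l⟩
  simp only [sum_apply, kroneckerMap_apply, submatrix_apply, single_apply]
  by_cases hml : m = l
  · subst hml
    simp
  · rw [hM a b m l hml]
    refine Eq.symm <| Finset.sum_eq_zero fun k _ => ?_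
    rw [if_neg, mul_zero]
    rintro ⟨rfl, rfl⟩
    exact hml rfl

end Matrix

/-- Let `Φ` be a quantum channel on `ℂ^d` (so its Choi matrix
`∑_{i,j} |i⟩⟨j| ⊗ Φ(|i⟩⟨j|)` is positive semidefinite) such that `Φ(|i⟩⟨j|)` is diagonal in
the reference basis for all `i, j`. Then the Choi state is separable: it is a sum of
(positive) product operators `ρ_k ⊗ |k⟩⟨k|`; hence `Φ` is entanglement breaking. -/
theorem choi_separable_of_diagonal_outputs (d : ℕ)
    (Φ : Matrix (Fin d) (Fin d) ℂ →ₗ[ℂ] Matrix (Fin d) (Fin d) ℂ)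
    (hdiag : ∀ i j : Fin d, (Φ (Matrix.single i j (1 : ℂ))).IsDiag)
    (hchoi : (∑ i, ∑ j, (Matrix.single i j (1 : ℂ)) ⊗ₖ
        (Φ (Matrix.single i j (1 : ℂ)))).PosSemidef) :
    ∃ ρ : Fin d → Matrix (Fin d) (Fin d) ℂ,
      (∀ k, (ρ k).PosSemidef) ∧
      (∑ i, ∑ j, (Matrix.single i j (1 : ℂ)) ⊗ₖ
          (Φ (Matrix.single i j (1 : ℂ))))
        = ∑ k, (ρ k) ⊗ₖ Matrix.single k k (1 : ℂ) := by
  refine ⟨fun k => _, fun k => hchoi.submatrix (·, k),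
    eq_sum_submatrix_kronecker_single_of_blockDiagonal fun a b m l hml => ?_⟩
  rw [sum_sum_single_kronecker_apply]
  exact hdiag a b hml
end

section
/- Every coherence breaking channel is a quantum–classical channel: if Φ is an incoherent channel with Φ(ρ) incoherent for all states ρ, then Φ(ρ) = ∑_i |i⟩⟨i| Tr(ρ F_i) for some POVM {F_i} (F_i ≥ 0, ∑_i F_i = I). -/
open Matrix ComplexOrder

/-!
Write `Φ(ρ) = ∑ₙ Kₙ ρ Kₙᴴ` and `Φ†(X) = ∑ₙ Kₙᴴ X Kₙ` for its dual, so that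
`Tr(ρ Φ†(X)) = Tr(Φ(ρ) X)`. Put `Fᵢ = Φ†(|i⟩⟨i|)`: these are positive semidefinite, and
they sum to `Φ†(1) = ∑ₙ Kₙᴴ Kₙ = 1`. If `Φ(ρ)` is diagonal, it is `∑ᵢ Φ(ρ)ᵢᵢ |i⟩⟨i|`,
and `Φ(ρ)ᵢᵢ = Tr(Φ(ρ) |i⟩⟨i|) = Tr(ρ Fᵢ)`.
-/

namespace Matrix

variable {ι m n R : Type*} [Fintype ι]

section Kraus

variable [CommSemiring R] [StarRing R]

def krausMap [Fintype n] (K : ι → Matrix m n R) (ρ : Matrix n n R) : Matrix m m R :=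
  ∑ k, K k * ρ * (K k)ᴴ

def krausDualMap [Fintype m] (K : ι → Matrix m n R) (X : Matrix m m R) : Matrix n n R :=
  ∑ k, (K k)ᴴ * X * K k

theorem trace_mul_krausDualMap [Fintype m] [Fintype n] (K : ι → Matrix m n R)
    (ρ : Matrix n n R) (X : Matrix m m R) :
    (ρ * krausDualMap K X).trace = (krausMap K ρ * X).trace := by
  simp only [krausDualMap, krausMap, Matrix.mul_sum, Matrix.sum_mul, trace_sum]
  refine Finset.sum_congr rfl fun k _ => ?_
  rw [← Matrix.mul_assoc, ← Matrix.mul_assoc, trace_mul_comm, ← Matrix.mul_assoc,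
    ← Matrix.mul_assoc]

theorem sum_krausDualMap [Fintype m] {κ : Type*} [Fintype κ] (K : ι → Matrix m n R)
    (X : κ → Matrix m m R) : ∑ j, krausDualMap K (X j) = krausDualMap K (∑ j, X j) := by
  simp only [krausDualMap, Matrix.mul_sum, Matrix.sum_mul]
  exact Finset.sum_comm

theorem krausDualMap_one [Fintype m] [DecidableEq m] (K : ι → Matrix m n R) :
    krausDualMap K 1 = ∑ k, (K k)ᴴ * K k := by
  simp only [krausDualMap, Matrix.mul_one]

end Kraus

theorem PosSemidef.krausDualMap [Fintype m] [Fintype n] [CommRing R] [PartialOrder R]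
    [StarRing R] [StarOrderedRing R] {X : Matrix m m R} (hX : X.PosSemidef)
    (K : ι → Matrix m n R) :
    (krausDualMap K X).PosSemidef :=
  posSemidef_sum _ fun k _ => hX.conjTranspose_mul_mul_same (K k)

theorem posSemidef_single_one [DecidableEq n] [CommRing R] [PartialOrder R] [StarRing R]
    [StarOrderedRing R] (i : n) : (single i i (1 : R)).PosSemidef := by
  rw [← diagonal_single]
  exact .diagonal (Pi.single_nonneg.mpr zero_le_one)

theorem IsDiag.eq_sum_smul_single [Fintype n] [DecidableEq n] [Semiring R] {A : Matrix n n R}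
    (hA : A.IsDiag) : A = ∑ i, A i i • single i i (1 : R) := by
  simp only [smul_single, smul_eq_mul, mul_one, sum_single_eq_diagonal]
  exact hA.diagonal_diag.symm

end Matrix

theorem coherence_breaking_is_quantum_classical_general (d N : ℕ)
    (K : Fin N → Matrix (Fin d) (Fin d) ℂ)
    (hcomp : ∑ n, (K n)ᴴ * K n = 1)
    (hcb : ∀ ρ : Matrix (Fin d) (Fin d) ℂ, ρ.PosSemidef → ρ.trace = 1 →
      (∑ n, K n * ρ * (K n)ᴴ).IsDiag) :
    ∃ F : Fin d → Matrix (Fin d) (Fin d) ℂ,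
      (∀ i, (F i).PosSemidef) ∧ (∑ i, F i = 1) ∧
      ∀ ρ : Matrix (Fin d) (Fin d) ℂ, ρ.PosSemidef → ρ.trace = 1 →
        ∑ n, K n * ρ * (K n)ᴴ = ∑ i, (ρ * F i).trace • Matrix.single i i (1 : ℂ) := by
  refine ⟨fun i => krausDualMap K (single i i 1),
    fun i => (posSemidef_single_one i).krausDualMap K,
    by rw [sum_krausDualMap, sum_single_one, krausDualMap_one, hcomp], fun ρ hρ hρ1 => ?_⟩
  have hdiag : (krausMap K ρ).IsDiag := hcb ρ hρ hρ1
  change krausMap K ρ = _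
  rw [hdiag.eq_sum_smul_single]
  refine Finset.sum_congr rfl fun i _ => ?_
  rw [trace_mul_krausDualMap, trace_mul_single, MulOpposite.op_one, one_smul]

/-- Every coherence breaking channel is a quantum–classical channel. If a channel
given by Kraus operators `{K_n}` (with `∑ K_n† K_n = I`) is incoherent (each `K_n · K_n†`
maps diagonal matrices to diagonal matrices) and its output `∑ K_n ρ K_n†` is diagonal for
every density matrix `ρ`, then there is a POVM `{F_i}` (`F_i ≥ 0`, `∑ F_i = I`) with
`Φ(ρ) = ∑_i |i⟩⟨i| Tr(ρ F_i)` on all states `ρ`. -/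
theorem coherence_breaking_is_quantum_classical (d N : ℕ)
    (K : Fin N → Matrix (Fin d) (Fin d) ℂ)
    (hcomp : ∑ n, (K n)ᴴ * K n = 1)
    (hinc : ∀ n (A : Matrix (Fin d) (Fin d) ℂ), A.IsDiag → (K n * A * (K n)ᴴ).IsDiag)
    (hcb : ∀ ρ : Matrix (Fin d) (Fin d) ℂ, ρ.PosSemidef → ρ.trace = 1 →
      (∑ n, K n * ρ * (K n)ᴴ).IsDiag) :
    ∃ F : Fin d → Matrix (Fin d) (Fin d) ℂ,
      (∀ i, (F i).PosSemidef) ∧ (∑ i, F i = 1) ∧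
      ∀ ρ : Matrix (Fin d) (Fin d) ℂ, ρ.PosSemidef → ρ.trace = 1 →
        ∑ n, K n * ρ * (K n)ᴴ = ∑ i, (ρ * F i).trace • Matrix.single i i (1 : ℂ) :=
  coherence_breaking_is_quantum_classical_general d N K hcomp hcb
end

section
/- The generalized amplitude damping channel satisfies the semigroup-type relation D_{p,t}ⁿ = D_{pⁿ,t} for every n ≥ 1; consequently, for 0 < p < 1 no finite iterate of D_{p,t} is coherence breaking, i.e., its coherence breaking index is infinite. -/
open Matrix

/-- A qubit channel given in the Bloch picture by the pair `(M, n)` is coherence breaking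
iff the first two rows of `M` and the first two components of `n` vanish. -/
def CBpair (M : Matrix (Fin 3) (Fin 3) ℝ) (v : Fin 3 → ℝ) : Prop :=
  (∀ j, M 0 j = 0 ∧ M 1 j = 0) ∧ v 0 = 0 ∧ v 1 = 0

/-- Bloch-picture matrix of the generalized amplitude damping channel `D_{p,t}`. -/
noncomputable def Mgad (p : ℝ) : Matrix (Fin 3) (Fin 3) ℝ :=
  Matrix.diagonal ![Real.sqrt p, Real.sqrt p, p]

/-- Bloch-picture translation vector of the generalized amplitude damping channel `D_{p,t}`. -/
noncomputable def ngad (p t : ℝ) : Fin 3 → ℝ :=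
  ![0, 0, (1 - p) * (2 * t - 1)]

/-!
Composing Bloch maps gives `(M, n) ∘ (M', n') = (M M', M n' + n)`, and on the family `D_{p,t}`
this is multiplicative in `p`: `D_{q,t} ∘ D_{p,t} = D_{qp,t}`. Iterating yields `D_{p,t}ⁿ = D_{pⁿ,t}`,
whose matrix still has the entry `√(pⁿ) > 0` in its first row, so it never breaks coherence.
-/

theorem Mgad_one : Mgad 1 = 1 := by
  rw [Mgad, ← diagonal_one]
  congr 1
  ext i
  fin_cases i <;> simp

theorem Mgad_mul {p q : ℝ} (hq : 0 ≤ q) : Mgad q * Mgad p = Mgad (q * p) := by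
  rw [Mgad, Mgad, Mgad, diagonal_mul_diagonal]
  congr 1
  ext i
  fin_cases i <;> simp [Real.sqrt_mul hq]

theorem ngad_add_Mgad_mulVec_ngad (p q t : ℝ) :
    ngad q t + Mgad q *ᵥ ngad p t = ngad (q * p) t := by
  ext i
  fin_cases i <;> simp [Mgad, ngad, mulVec_diagonal]
  ring

theorem Mgad_pow {p : ℝ} (hp : 0 ≤ p) (n : ℕ) : Mgad p ^ n = Mgad (p ^ n) := by
  induction n with
  | zero => rw [pow_zero, pow_zero, Mgad_one]
  | succ n ih => rw [pow_succ, ih, Mgad_mul (pow_nonneg hp n), pow_succ]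

theorem sum_Mgad_pow_mulVec_ngad {p : ℝ} (hp : 0 ≤ p) (t : ℝ) (n : ℕ) :
    (∑ k ∈ Finset.range n, Mgad p ^ k) *ᵥ ngad p t = ngad (p ^ n) t := by
  induction n with
  | zero =>
    ext i
    fin_cases i <;> simp [ngad]
  | succ n ih =>
    rw [Finset.sum_range_succ, add_mulVec, ih, Mgad_pow hp, ngad_add_Mgad_mulVec_ngad, pow_succ]

theorem not_CBpair_Mgad {p : ℝ} (hp : 0 < p) (v : Fin 3 → ℝ) : ¬ CBpair (Mgad p) v := by
  rintro ⟨hrows, -⟩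
  have h00 : Mgad p 0 0 = Real.sqrt p := by simp [Mgad]
  exact (Real.sqrt_pos.mpr hp).ne' (h00 ▸ (hrows 0).1)

theorem gad_semigroup_and_never_coherence_breaking_general (p t : ℝ)
    (hp0 : 0 < p) :
    (∀ n : ℕ, Mgad p ^ n = Mgad (p ^ n) ∧
      (∑ k ∈ Finset.range n, Mgad p ^ k).mulVec (ngad p t) = ngad (p ^ n) t) ∧
    ∀ n : ℕ, 1 ≤ n → ¬ CBpair (Mgad (p ^ n)) (ngad (p ^ n) t) :=
  ⟨fun n => ⟨Mgad_pow hp0.le n, sum_Mgad_pow_mulVec_ngad hp0.le t n⟩,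
    fun n _ => not_CBpair_Mgad (pow_pos hp0 n) _⟩

/-- The generalized amplitude damping channel satisfies `D_{p,t}ⁿ = D_{pⁿ,t}`
(its `n`-fold Bloch iterate is represented by `(Mgad (pⁿ), ngad (pⁿ) t)`); consequently, for
`0 < p < 1` no finite iterate of `D_{p,t}` is coherence breaking: the coherence breaking
index is infinite. -/
theorem gad_semigroup_and_never_coherence_breaking (p t : ℝ)
    (hp0 : 0 < p) (hp1 : p < 1) (ht0 : 0 ≤ t) (ht1 : t ≤ 1) :
    (∀ n : ℕ, Mgad p ^ n = Mgad (p ^ n) ∧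
      (∑ k ∈ Finset.range n, Mgad p ^ k).mulVec (ngad p t) = ngad (p ^ n) t) ∧
    ∀ n : ℕ, 1 ≤ n → ¬ CBpair (Mgad (p ^ n)) (ngad (p ^ n) t) :=
  gad_semigroup_and_never_coherence_breaking_general p t hp0
end

section
/- For any incoherent qubit channel Φ and any qubit state ρ there exists a maximally coherent state |ψ⟩ (depending on ρ) such that C_{l₁}(Φ(ρ)) = C_{l₁}(ρ) · C_{l₁}(Φ(|ψ⟩⟨ψ|)). -/
/-!
Write `ρ₀₁ = |c| e^{iθ}`. A Hermitian qubit matrix `ρ` differs from `2|c| · |ψ_θ⟩⟨ψ_θ|`, for the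
maximally coherent state `ψ_θ = (|0⟩ + e^{−iθ}|1⟩)/√2`, by a diagonal matrix. An incoherent channel
keeps that difference diagonal, and diagonal matrices do not contribute to `C_{l₁}`; hence
`C_{l₁}(Φ ρ) = 2|c| · C_{l₁}(Φ |ψ_θ⟩⟨ψ_θ|)`, while `C_{l₁}(ρ) = |ρ₀₁| + |ρ₁₀| = 2|c|`.
-/

open Matrix ComplexOrder

/-- The `l₁` norm of coherence: the sum of moduli of all off-diagonal entries. -/
noncomputable def Cl1 {d : ℕ} (A : Matrix (Fin d) (Fin d) ℂ) : ℝ :=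
  ∑ i, ∑ j, if i ≠ j then ‖A i j‖ else 0

section Cl1

variable {d : ℕ}

theorem Cl1_real_smul (r : ℝ) (A : Matrix (Fin d) (Fin d) ℂ) : Cl1 (r • A) = |r| * Cl1 A := by
  simp only [Cl1, Finset.mul_sum, mul_ite, mul_zero, Matrix.smul_apply, norm_smul,
    Real.norm_eq_abs]

theorem Cl1_add_of_isDiag_left {D : Matrix (Fin d) (Fin d) ℂ} (hD : D.IsDiag)
    (A : Matrix (Fin d) (Fin d) ℂ) : Cl1 (D + A) = Cl1 A := by
  unfold Cl1
  refine Finset.sum_congr rfl fun i _ => Finset.sum_congr rfl fun j _ => ?_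
  split_ifs with hij
  · rw [Matrix.add_apply, hD hij, zero_add]
  · rfl

theorem Cl1_fin_two (A : Matrix (Fin 2) (Fin 2) ℂ) : Cl1 A = ‖A 0 1‖ + ‖A 1 0‖ := by
  simp [Cl1, Fin.sum_univ_two]

theorem Cl1_fin_two_of_isHermitian {A : Matrix (Fin 2) (Fin 2) ℂ} (hA : A.IsHermitian) :
    Cl1 A = 2 * ‖A 0 1‖ := by
  rw [Cl1_fin_two, ← hA.apply 0 1, RCLike.star_def, Complex.norm_conj, two_mul]

end Cl1

theorem Matrix.IsHermitian.isDiag_of_apply_zero_one {α : Type*} [AddMonoid α] [StarAddMonoid α]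
    {A : Matrix (Fin 2) (Fin 2) α} (hA : A.IsHermitian) (h : A 0 1 = 0) : A.IsDiag := by
  intro i j hij
  fin_cases i <;> fin_cases j
  · exact absurd rfl hij
  · exact h
  · simpa [h] using (hA.apply 1 0).symm
  · exact absurd rfl hij

/-- `|ψ⟩⟨ψ|` for `ψ = (|0⟩ + e^{−iθ}|1⟩)/√2`. -/
noncomputable def maxCoherentState (θ : ℝ) : Matrix (Fin 2) (Fin 2) ℂ :=
  !![(1 / 2 : ℂ), Complex.exp (Complex.I * θ) / 2;
     Complex.exp (-(Complex.I * θ)) / 2, (1 / 2 : ℂ)]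

theorem isHermitian_maxCoherentState (θ : ℝ) : (maxCoherentState θ).IsHermitian := by
  ext i j
  fin_cases i <;> fin_cases j <;> simp [maxCoherentState, ← Complex.exp_conj]

theorem isDiag_sub_smul_maxCoherentState {ρ : Matrix (Fin 2) (Fin 2) ℂ} (hρ : ρ.IsHermitian) :
    (ρ - (2 * ‖ρ 0 1‖) • maxCoherentState (ρ 0 1).arg).IsDiag := by
  have hherm := hρ.sub ((isHermitian_maxCoherentState (ρ 0 1).arg).smul (IsSelfAdjoint.all
    (2 * ‖ρ 0 1‖)))
  refine hherm.isDiag_of_apply_zero_one ?_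
  have hpolar := Complex.norm_mul_exp_arg_mul_I (ρ 0 1)
  rw [mul_comm _ Complex.I] at hpolar
  change ρ 0 1 - (2 * ‖ρ 0 1‖) • (Complex.exp (Complex.I * (ρ 0 1).arg) / 2) = 0
  rw [Complex.real_smul]
  push_cast
  linear_combination -hpolar

theorem qubit_coherence_factorization_general
    (Φ : Matrix (Fin 2) (Fin 2) ℂ →ₗ[ℂ] Matrix (Fin 2) (Fin 2) ℂ)
    (hinc : ∀ A : Matrix (Fin 2) (Fin 2) ℂ, A.IsDiag → (Φ A).IsDiag)
    (ρ : Matrix (Fin 2) (Fin 2) ℂ) (hρ : ρ.PosSemidef) :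
    ∃ θ : ℝ,
      Cl1 (Φ ρ) = Cl1 ρ *
        Cl1 (Φ !![(1 / 2 : ℂ), Complex.exp (Complex.I * θ) / 2;
                  Complex.exp (-(Complex.I * θ)) / 2, (1 / 2 : ℂ)]) := by
  refine ⟨(ρ 0 1).arg, ?_⟩
  set r : ℝ := 2 * ‖ρ 0 1‖
  set ψ := maxCoherentState (ρ 0 1).arg
  have hΦρ : Φ ρ = Φ (ρ - r • ψ) + r • Φ ψ := by
    rw [← LinearMap.map_smul_of_tower, ← map_add, sub_add_cancel]
  have hdiag : (Φ (ρ - r • ψ)).IsDiag := hinc _ (isDiag_sub_smul_maxCoherentState hρ.isHermitian)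
  rw [hΦρ, Cl1_add_of_isDiag_left hdiag, Cl1_real_smul, abs_of_nonneg (by positivity),
    Cl1_fin_two_of_isHermitian hρ.isHermitian]
  rfl

/-- For any incoherent qubit channel `Φ` (a linear map sending density matrices
to density matrices and diagonal matrices to diagonal matrices) and any qubit state `ρ`,
there exists a maximally coherent state `|ψ⟩ = (|0⟩ + e^{−iθ}|1⟩)/√2` (depending on `ρ`)
such that `C_{l₁}(Φ(ρ)) = C_{l₁}(ρ) · C_{l₁}(Φ(|ψ⟩⟨ψ|))`. -/
theorem qubit_coherence_factorization
    (Φ : Matrix (Fin 2) (Fin 2) ℂ →ₗ[ℂ] Matrix (Fin 2) (Fin 2) ℂ)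
    (hchan : ∀ ρ : Matrix (Fin 2) (Fin 2) ℂ, ρ.PosSemidef → ρ.trace = 1 →
      (Φ ρ).PosSemidef ∧ (Φ ρ).trace = 1)
    (hinc : ∀ A : Matrix (Fin 2) (Fin 2) ℂ, A.IsDiag → (Φ A).IsDiag)
    (ρ : Matrix (Fin 2) (Fin 2) ℂ) (hρ : ρ.PosSemidef) (htr : ρ.trace = 1) :
    ∃ θ : ℝ,
      Cl1 (Φ ρ) = Cl1 ρ *
        Cl1 (Φ !![(1 / 2 : ℂ), Complex.exp (Complex.I * θ) / 2;
                  Complex.exp (-(Complex.I * θ)) / 2, (1 / 2 : ℂ)]) :=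
  qubit_coherence_factorization_general Φ hinc ρ hρ
end
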